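/- If a convex body K in ℝⁿ of minimal width w is covered by finitely many planks of widths w₁, …, w_l, then w₁ + … + w_l ≥ w. -/

import Mathlib

variable {n : ℕ}

/-- A plank (slab) of width `w` in direction of the unit vector `u`. -/
def plank (u : EuclideanSpace ℝ (Fin n)) (a w : ℝ) : Set (EuclideanSpace ℝ (Fin n)) :=
  {x | a ≤ (inner ℝ x u : ℝ) ∧ (inner ℝ x u : ℝ) ≤ a + w}

/-- The width of a set `K` in direction `u`. -/
noncomputable def dirWidth (K : Set (EuclideanSpace ℝ (Fin n)))
    (u : EuclideanSpace ℝ (Fin n)) : ℝ :=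
  sSup ((fun x => (inner ℝ x u : ℝ)) '' K) - sInf ((fun x => (inner ℝ x u : ℝ)) '' K)

/-!
Suppose `∑ wᵢ < w` and pick `cᵢ > wᵢ / 2` with `2 ∑ cᵢ ≤ w`. Eroding `K` by a segment `[-s, s]`
lowers its minimal width by at most `2 ‖s‖` (the support function of an intersection is the
infimal convolution of the support functions, which is where Hahn–Banach enters), so eroding
by the segments `[-cᵢ uᵢ, cᵢ uᵢ]` one after the other shows that `K` contains all the points
`t + ∑ ±cᵢ uᵢ`. Bang's sign choice then produces one of them at distance at least `cᵢ` from the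
middle hyperplane of the `i`-th plank for every `i`, so it lies in no plank.
-/

open Finset
open scoped RealInnerProductSpace

section SignedSum

variable {ι M : Type*} [AddCommGroup M]

def signedSum (s : Finset ι) (ε : ι → Bool) (f : ι → M) : M :=
  ∑ i ∈ s, if ε i then f i else -f i

lemma signedSum_insert [DecidableEq ι] {s : Finset ι} {j : ι} (hj : j ∉ s) (ε : ι → Bool)
    (f : ι → M) :
    signedSum (insert j s) ε f = (if ε j then f j else -f j) + signedSum s ε f :=
  sum_insert hj

lemma signedSum_update_not [Fintype ι] [DecidableEq ι] (ε : ι → Bool) (f : ι → M) (i : ι) :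
    signedSum univ (Function.update ε i (!ε i)) f
      = signedSum univ ε f - 2 • (if ε i then f i else -f i) := by
  have hoff : ∀ j ∈ ({i}ᶜ : Finset ι), (if Function.update ε i (!ε i) j then f j else -f j)
      = if ε j then f j else -f j := fun j hj => by
    rw [Function.update_of_ne (by simpa using hj)]
  rw [signedSum, signedSum, Fintype.sum_eq_add_sum_compl i, Fintype.sum_eq_add_sum_compl i,
    sum_congr rfl hoff, Function.update_self]
  cases ε i <;>
    simp only [Bool.not_false, Bool.not_true, Bool.false_eq_true, if_true, if_false] <;> abel

end SignedSum

section Erosion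

variable {G : Type*} [AddCommGroup G] {K : Set G}

def Set.erode (K : Set G) (s : G) : Set G := (s + ·) ⁻¹' K ∩ (-s + ·) ⁻¹' K

lemma Convex.erode [Module ℝ G] (hK : Convex ℝ K) (s : G) : Convex ℝ (K.erode s) :=
  (hK.translate_preimage_right s).inter (hK.translate_preimage_right (-s))

variable [TopologicalSpace G] [IsTopologicalAddGroup G]

lemma IsCompact.preimage_add_left (hK : IsCompact K) (s : G) : IsCompact ((s + ·) ⁻¹' K) :=
  (Homeomorph.addLeft s).isCompact_preimage.2 hK

lemma IsCompact.erode [T2Space G] (hK : IsCompact K) (s : G) : IsCompact (K.erode s) :=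
  (hK.preimage_add_left s).inter_right (hK.preimage_add_left (-s)).isClosed

end Erosion

variable {E : Type*} [NormedAddCommGroup E] [InnerProductSpace ℝ E]

theorem exists_sq_norm_le_abs_inner_signedSum_sub {ι : Type*} [Fintype ι] (x : ι → E)
    (β : ι → ℝ) : ∃ ε : ι → Bool, ∀ i, ‖x i‖ ^ 2 ≤ |⟪signedSum univ ε x, x i⟫ - β i| := by
  classical
  obtain ⟨ε, hε⟩ := Finite.exists_max fun ε : ι → Bool =>
    ‖signedSum univ ε x‖ ^ 2 - 2 * signedSum univ ε β
  refine ⟨ε, fun i => ?_⟩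
  -- flipping the `i`-th sign of this maximiser does not increase the potential
  have hflip := hε (Function.update ε i (!ε i))
  set V := signedSum univ ε x
  set y := if ε i then x i else -x i
  set b := if ε i then β i else -β i
  have hy : ‖y‖ = ‖x i‖ := by cases h : ε i <;> simp [y, h]
  have hyb : ⟪V, y⟫ - b ≤ |⟪V, x i⟫ - β i| := by
    cases h : ε i
    · simp only [y, b, h, Bool.false_eq_true, if_false, inner_neg_right]
      linarith [neg_le_abs (⟪V, x i⟫ - β i)]
    · simpa only [y, b, h, if_true] using le_abs_self _
  simp only [signedSum_update_not, two_smul] at hflip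
  rw [norm_sub_sq_real, inner_add_right, norm_add_sq_real, real_inner_self_eq_norm_sq, hy]
    at hflip
  linarith

/-- A strict form of the formula for the support function of `A ∩ B` as the infimal convolution
of those of `A` and `B`. -/
theorem exists_inner_add_inner_lt_of_inter [CompleteSpace E] {A B : Set E} (hA : IsCompact A)
    (hAc : Convex ℝ A) (hB : IsCompact B) (hBc : Convex ℝ B) {x₀ : E} (hx₀ : x₀ ∈ A ∩ B)
    {v : E} {γ : ℝ} (hγ : ∀ x ∈ A ∩ B, ⟪x, v⟫ < γ) :
    ∃ p : E, ∀ a ∈ A, ∀ b ∈ B, ⟪a, p⟫ + ⟪b, v - p⟫ < γ := by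
  let L : E × E →L[ℝ] E × ℝ := (ContinuousLinearMap.fst ℝ E E - ContinuousLinearMap.snd ℝ E E).prod
    ((innerSL ℝ v).comp (ContinuousLinearMap.snd ℝ E E))
  have hL : ∀ a b, L (a, b) = (a - b, ⟪b, v⟫) := fun a b => by simp [L, real_inner_comm]
  have hnot : ((0 : E), γ) ∉ L '' A ×ˢ B := by
    rintro ⟨⟨a, b⟩, ⟨ha, hb⟩, hab⟩
    rw [hL, Prod.mk.injEq, sub_eq_zero] at hab
    obtain ⟨rfl, hab⟩ := hab
    exact (hγ a ⟨ha, hb⟩).ne hab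
  obtain ⟨f, s, hfs, hsf⟩ := geometric_hahn_banach_closed_point
    ((hAc.prod hBc).linear_image L.toLinearMap) ((hA.prod hB).image L.continuous).isClosed hnot
  have hf : ∀ d r, f (d, r) = f (d, 0) + r * f (0, 1) := fun d r => by
    rw [← smul_eq_mul, ← map_smul, ← map_add, Prod.smul_mk, smul_zero, smul_eq_mul, mul_one,
      Prod.mk_add_mk, add_zero, zero_add]
  set β := f (0, 1)
  -- `x₀` makes the last coordinate of the separating functional positive
  have hβ : 0 < β := by
    have h₀ := hfs _ ⟨(x₀, x₀), ⟨hx₀.1, hx₀.2⟩, rfl⟩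
    rw [ContinuousLinearMap.coe_coe, hL, sub_self, hf] at h₀
    rw [hf] at hsf
    have := hγ x₀ hx₀
    simp only [Prod.mk_zero_zero, map_zero] at h₀ hsf
    nlinarith
  set φ := (InnerProductSpace.toDual ℝ E).symm (f.comp (.inl ℝ E ℝ))
  have hφ : ∀ x, ⟪x, φ⟫ = f (x, 0) := fun x => by
    rw [real_inner_comm, InnerProductSpace.toDual_symm_apply]
    rfl
  refine ⟨β⁻¹ • φ, fun a ha b hb => ?_⟩
  have hab := hfs _ ⟨(a, b), ⟨ha, hb⟩, rfl⟩
  rw [ContinuousLinearMap.coe_coe, hL, hf, ← sub_zero (0 : ℝ), ← Prod.mk_sub_mk, map_sub] at hab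
  rw [hf, Prod.mk_zero_zero, map_zero, zero_add] at hsf
  rw [inner_sub_right, real_inner_smul_right, real_inner_smul_right, hφ, hφ]
  field_simp
  linarith

/-- `K` has width at least `w` in every direction, stated homogeneously in `z`; the case `z = 0`
says that `K` is nonempty. -/
def HasWidthAtLeast (K : Set E) (w : ℝ) : Prop :=
  ∀ z : E, ∃ x ∈ K, ∃ y ∈ K, w * ‖z‖ ≤ ⟪x - y, z⟫

section Width

variable {K : Set E} {w : ℝ}

lemma HasWidthAtLeast.nonempty (h : HasWidthAtLeast K w) : K.Nonempty :=
  let ⟨x, hx, _⟩ := h 0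
  ⟨x, hx⟩

lemma HasWidthAtLeast.mono (h : HasWidthAtLeast K w) {w' : ℝ} (hw : w' ≤ w) :
    HasWidthAtLeast K w' := fun z =>
  let ⟨x, hx, y, hy, hxy⟩ := h z
  ⟨x, hx, y, hy, (mul_le_mul_of_nonneg_right hw (norm_nonneg z)).trans hxy⟩

variable [CompleteSpace E]

lemma HasWidthAtLeast.erode_nonempty (hK : IsCompact K) (hKc : Convex ℝ K)
    (h : HasWidthAtLeast K w) {s : E} (hs : 2 * ‖s‖ ≤ w) : (K.erode s).Nonempty := by
  by_contra hempty
  rw [Set.not_nonempty_iff_eq_empty, Set.erode, ← Set.disjoint_iff_inter_eq_empty] at hempty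
  obtain ⟨f, r, t, hfr, hrt, htf⟩ := geometric_hahn_banach_compact_closed
    (hKc.translate_preimage_right s) (hK.preimage_add_left s)
    (hKc.translate_preimage_right (-s)) (hK.preimage_add_left (-s)).isClosed hempty
  set z := (InnerProductSpace.toDual ℝ E).symm f
  have hz : ∀ x, f x = ⟪x, z⟫ := fun x => by
    rw [real_inner_comm, InnerProductSpace.toDual_symm_apply]
  obtain ⟨x, hx, y, hy, hxy⟩ := h z
  have hx' := hfr (-s + x) (by simpa using hx)
  have hy' := htf (s + y) (by simpa using hy)
  rw [hz, inner_add_left, inner_neg_left] at hx'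
  rw [hz, inner_add_left] at hy'
  rw [inner_sub_left] at hxy
  have hsz := real_inner_le_norm s z
  nlinarith [norm_nonneg z]

theorem HasWidthAtLeast.lt_add_of_erode (hK : IsCompact K) (hKc : Convex ℝ K)
    (h : HasWidthAtLeast K w) {s : E} (hs : 2 * ‖s‖ ≤ w) {v : E} {α β : ℝ}
    (hα : ∀ y ∈ K.erode s, ⟪y, v⟫ < α) (hβ : ∀ y ∈ K.erode s, ⟪y, -v⟫ < β) :
    (w - 2 * ‖s‖) * ‖v‖ < α + β := by
  obtain ⟨x₀, hx₀⟩ := h.erode_nonempty hK hKc hs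
  have hA := hK.preimage_add_left s
  have hB := hK.preimage_add_left (-s)
  have hAc := hKc.translate_preimage_right s
  have hBc := hKc.translate_preimage_right (-s)
  obtain ⟨p, hp⟩ := exists_inner_add_inner_lt_of_inter hA hAc hB hBc hx₀ hα
  obtain ⟨q, hq⟩ := exists_inner_add_inner_lt_of_inter hA hAc hB hBc hx₀ hβ
  have hmemA : ∀ x ∈ K, -s + x ∈ (s + ·) ⁻¹' K := fun x hx => by simpa using hx
  have hmemB : ∀ x ∈ K, s + x ∈ (-s + ·) ⁻¹' K := fun x hx => by simpa using hx
  have hspq := real_inner_le_norm s (p + q)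
  have hw : 0 ≤ w - 2 * ‖s‖ := by linarith
  -- with `z = p + q`, use the width of `K` in direction `z` if `‖v‖ ≤ ‖z‖`, in direction `v` if not
  rcases le_total ‖v‖ ‖p + q‖ with hvz | hzv
  · obtain ⟨x, hx, y, hy, hxy⟩ := h (p + q)
    have h₁ := hp _ (hmemA x hx) _ (hmemB y hy)
    have h₂ := hq _ (hmemA x hx) _ (hmemB y hy)
    have := mul_le_mul_of_nonneg_left hvz hw
    simp only [inner_add_left, inner_add_right, inner_sub_left, inner_sub_right, inner_neg_left,
      inner_neg_right] at h₁ h₂ hxy hspq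
    nlinarith
  · obtain ⟨x, hx, y, hy, hxy⟩ := h v
    have h₁ := hp _ (hmemA x hx) _ (hmemB x hx)
    have h₂ := hq _ (hmemA y hy) _ (hmemB y hy)
    have := mul_le_mul_of_nonneg_left hzv (by positivity : 0 ≤ 2 * ‖s‖)
    simp only [inner_add_left, inner_add_right, inner_sub_left, inner_sub_right, inner_neg_left,
      inner_neg_right] at h₁ h₂ hxy hspq
    nlinarith

theorem HasWidthAtLeast.erode (hK : IsCompact K) (hKc : Convex ℝ K) (h : HasWidthAtLeast K w)
    {s : E} (hs : 2 * ‖s‖ ≤ w) : HasWidthAtLeast (K.erode s) (w - 2 * ‖s‖) := by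
  intro v
  have hne := h.erode_nonempty hK hKc hs
  have hcont : ContinuousOn (fun y => ⟪y, v⟫) (K.erode s) := by fun_prop
  obtain ⟨x, hx, hxmax⟩ := (hK.erode s).exists_isMaxOn hne hcont
  obtain ⟨y, hy, hymin⟩ := (hK.erode s).exists_isMinOn hne hcont
  refine ⟨x, hx, y, hy, le_of_forall_pos_lt_add fun δ hδ => ?_⟩
  have := h.lt_add_of_erode hK hKc hs (v := v) (α := ⟪x, v⟫ + δ / 2) (β := -⟪y, v⟫ + δ / 2)
    (fun z hz => by linarith [isMaxOn_iff.1 hxmax z hz])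
    (fun z hz => by linarith [inner_neg_right (𝕜 := ℝ) z v, isMinOn_iff.1 hymin z hz])
  rw [inner_sub_left]
  linarith

theorem HasWidthAtLeast.exists_add_signedSum_mem {ι : Type*} (hK : IsCompact K)
    (hKc : Convex ℝ K) (x : ι → E) (s : Finset ι) (h : HasWidthAtLeast K (2 * ∑ i ∈ s, ‖x i‖)) :
    ∃ t, ∀ ε, t + signedSum s ε x ∈ K := by
  classical
  induction s using Finset.induction_on generalizing K with
  | empty =>
    obtain ⟨t, ht⟩ := h.nonempty
    exact ⟨t, fun ε => by simpa [signedSum] using ht⟩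
  | insert j s hj ih =>
    rw [sum_insert hj] at h
    have hxj : 2 * ‖x j‖ ≤ 2 * (‖x j‖ + ∑ i ∈ s, ‖x i‖) := by
      linarith [sum_nonneg fun i (_ : i ∈ s) => norm_nonneg (x i)]
    obtain ⟨t, ht⟩ := ih (hK.erode (x j)) (hKc.erode (x j))
      ((h.erode hK hKc hxj).mono (by linarith))
    refine ⟨t, fun ε => ?_⟩
    obtain ⟨hplus, hminus⟩ := ht ε
    rw [signedSum_insert hj]
    split_ifs
    · rw [add_left_comm]; exact hplus
    · rw [add_left_comm]; exact hminus

end Width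

lemma exists_dirWidth_eq_inner_sub {K : Set (EuclideanSpace ℝ (Fin n))} (hK : IsCompact K)
    (hne : K.Nonempty) (v : EuclideanSpace ℝ (Fin n)) :
    ∃ x ∈ K, ∃ y ∈ K, dirWidth K v = ⟪x - y, v⟫ := by
  have hc : IsCompact ((fun x => ⟪x, v⟫) '' K) := hK.image (by fun_prop)
  obtain ⟨x, hx, hxs⟩ := hc.sSup_mem (hne.image _)
  obtain ⟨y, hy, hyi⟩ := hc.sInf_mem (hne.image _)
  exact ⟨x, hx, y, hy, by rw [dirWidth, ← hxs, ← hyi, inner_sub_left]⟩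

lemma dirWidth_nonneg {K : Set (EuclideanSpace ℝ (Fin n))} (hK : IsCompact K)
    (hne : K.Nonempty) (v : EuclideanSpace ℝ (Fin n)) : 0 ≤ dirWidth K v := by
  have hc : IsCompact ((fun x => ⟪x, v⟫) '' K) := hK.image (by fun_prop)
  exact sub_nonneg.2 (csInf_le_csSup (hne.image _) hc.bddBelow hc.bddAbove)

theorem hasWidthAtLeast_of_forall_le_dirWidth {K : Set (EuclideanSpace ℝ (Fin n))}
    (hK : IsCompact K) (hne : K.Nonempty) {w : ℝ}
    (h : ∀ v : EuclideanSpace ℝ (Fin n), ‖v‖ = 1 → w ≤ dirWidth K v) : HasWidthAtLeast K w := by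
  intro z
  rcases eq_or_ne z 0 with rfl | hz
  · obtain ⟨x, hx⟩ := hne
    exact ⟨x, hx, x, hx, by simp⟩
  obtain ⟨x, hx, y, hy, hxy⟩ := exists_dirWidth_eq_inner_sub hK hne (‖z‖⁻¹ • z)
  refine ⟨x, hx, y, hy, ?_⟩
  have hwz := h (‖z‖⁻¹ • z) (by simpa using norm_smul_inv_norm (𝕜 := ℝ) hz)
  rw [hxy, real_inner_smul_right] at hwz
  have hz' : 0 < ‖z‖ := norm_pos_iff.2 hz
  calc w * ‖z‖ ≤ ‖z‖⁻¹ * ⟪x - y, z⟫ * ‖z‖ := by gcongr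
    _ = ⟪x - y, z⟫ := by field_simp

lemma abs_inner_sub_le_of_mem_plank {u x : EuclideanSpace ℝ (Fin n)} {a w : ℝ}
    (hx : x ∈ plank u a w) : |⟪x, u⟫ - (a + w / 2)| ≤ w / 2 :=
  abs_sub_le_iff.2 ⟨by linarith [hx.2], by linarith [hx.1]⟩

lemma exists_forall_lt_sum_le {ι : Type*} [Fintype ι] {f : ι → ℝ} {w : ℝ}
    (h : ∑ i, f i < w) : ∃ g : ι → ℝ, (∀ i, f i < g i) ∧ ∑ i, g i ≤ w := by
  set δ := (w - ∑ i, f i) / (Fintype.card ι + 1)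
  have hδ : 0 < δ := div_pos (by linarith) (by positivity)
  have hδw : (Fintype.card ι + 1) * δ = w - ∑ i, f i := mul_div_cancel₀ _ (by positivity)
  refine ⟨fun i => f i + δ, fun i => by linarith, ?_⟩
  rw [sum_add_distrib, sum_const, card_univ, nsmul_eq_mul]
  linarith

theorem bang_plank_general (K : Set (EuclideanSpace ℝ (Fin n)))
    (hK : IsCompact K) (hKc : Convex ℝ K)
    (w : ℝ) (hw : w = ⨅ u : {u : EuclideanSpace ℝ (Fin n) // ‖u‖ = 1}, dirWidth K u)
    (l : ℕ) (u : Fin l → EuclideanSpace ℝ (Fin n)) (a wp : Fin l → ℝ)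
    (hu : ∀ i, ‖u i‖ = 1) (hwp : ∀ i, 0 ≤ wp i)
    (hcov : K ⊆ ⋃ i, plank (u i) (a i) (wp i)) :
    w ≤ ∑ i, wp i := by
  rcases K.eq_empty_or_nonempty with rfl | hne
  · simp [hw, dirWidth, sum_nonneg fun i _ => hwp i]
  have hbdd : BddBelow (Set.range fun v : {v : EuclideanSpace ℝ (Fin n) // ‖v‖ = 1} =>
      dirWidth K v) := ⟨0, Set.forall_mem_range.2 fun v => dirWidth_nonneg hK hne v⟩
  have hwidth : HasWidthAtLeast K w := hasWidthAtLeast_of_forall_le_dirWidth hK hne fun v hv =>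
    hw ▸ ciInf_le hbdd ⟨v, hv⟩
  by_contra! hlt
  obtain ⟨c, hc, hcw⟩ := exists_forall_lt_sum_le (f := fun i => wp i / 2) (w := w / 2)
    (by rw [← sum_div]; linarith)
  have hc₀ : ∀ i, 0 < c i := fun i => by linarith [hwp i, hc i]
  have hcu : ∀ i, ‖c i • u i‖ = c i := fun i => by
    rw [norm_smul, hu, mul_one, Real.norm_of_nonneg (hc₀ i).le]
  obtain ⟨t, ht⟩ := (hwidth.mono (by simp only [hcu]; linarith)).exists_add_signedSum_mem
    hK hKc (fun i => c i • u i) univ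
  -- these offsets turn Bang's lemma into a bound on the distance to the planks' middle hyperplanes
  obtain ⟨ε, hε⟩ := exists_sq_norm_le_abs_inner_signedSum_sub (fun i => c i • u i)
    fun i => c i * (a i + wp i / 2) - ⟪t, c i • u i⟫
  obtain ⟨i, hi⟩ := Set.mem_iUnion.1 (hcov (ht ε))
  have hbang := hε i
  rw [hcu, real_inner_smul_right, real_inner_smul_right, ← mul_sub, ← mul_sub, sub_sub_eq_add_sub,
    ← inner_add_left, add_comm _ t, abs_mul, abs_of_pos (hc₀ i), sq] at hbang
  have := (le_of_mul_le_mul_left hbang (hc₀ i)).trans (abs_inner_sub_le_of_mem_plank hi)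
  linarith [hc i]

/-- Bang's theorem (Tarski's plank problem): if a convex body of minimal width `w`
is covered by finitely many planks, the sum of their widths is at least `w`. -/
theorem bang_plank (K : Set (EuclideanSpace ℝ (Fin n)))
    (hK : IsCompact K) (hKc : Convex ℝ K) (hKi : (interior K).Nonempty)
    (w : ℝ) (hw : w = ⨅ u : {u : EuclideanSpace ℝ (Fin n) // ‖u‖ = 1}, dirWidth K u)
    (l : ℕ) (u : Fin l → EuclideanSpace ℝ (Fin n)) (a wp : Fin l → ℝ)
    (hu : ∀ i, ‖u i‖ = 1) (hwp : ∀ i, 0 ≤ wp i)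
    (hcov : K ⊆ ⋃ i, plank (u i) (a i) (wp i)) :
    w ≤ ∑ i, wp i :=
  bang_plank_general K hK hKc w hw l u a wp hu hwp hcov
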